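/- Let G be a finite simple graph with positive real vertex weights ω, and let S be an independent set of G that is contained in every maximum ω-weight independent set of G. Let x ∈ N(S) satisfy ω(x) ≥ ω(S ∩ N(x)), and let y ∈ N(x) \ N[S] be such that ω(x) ≥ ω(S ∩ N(x)) + α_ω(G[(N(x) \ {y}) \ N[S]]). Then every maximum ω-weight independent set of G contains y. -/

import Mathlib

open scoped Classical

/-- `S` is an independent set of vertices in `G`: no two members are adjacent. -/
def IsIndepSet {V : Type*} (G : SimpleGraph V) (S : Finset V) : Prop :=
  ∀ a ∈ S, ∀ b ∈ S, ¬ G.Adj a b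

/-- The maximum total `w`-weight of an independent set of `G` contained in `A`
(the weighted independence number of the subgraph of `G` induced on `A`). -/
noncomputable def alphaOn {V : Type*} [Fintype V] (G : SimpleGraph V) (w : V → ℝ)
    (A : Set V) : ℝ :=
  sSup {x : ℝ | ∃ S : Finset V, ↑S ⊆ A ∧ IsIndepSet G S ∧ x = ∑ v ∈ S, w v}

/-- The maximum total `w`-weight of an independent set of `G`. -/
noncomputable def alpha {V : Type*} [Fintype V] (G : SimpleGraph V) (w : V → ℝ) : ℝ :=
  alphaOn G w Set.univ

/-- `S` is a maximum `w`-weight independent set of `G`. -/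
def IsMWIS {V : Type*} [Fintype V] (G : SimpleGraph V) (w : V → ℝ) (S : Finset V) : Prop :=
  IsIndepSet G S ∧ ∑ v ∈ S, w v = alpha G w

/-- The closed neighborhood `N[v]` of a vertex. -/
def closedNbhd {V : Type*} (G : SimpleGraph V) (v : V) : Set V :=
  insert v (G.neighborSet v)

/-- The open neighborhood `N(S)` of a set of vertices. -/
def setNbhd {V : Type*} (G : SimpleGraph V) (S : Set V) : Set V :=
  (⋃ s ∈ S, G.neighborSet s) \ S

/-- The closed neighborhood `N[S]` of a set of vertices. -/
def closedSetNbhd {V : Type*} (G : SimpleGraph V) (S : Set V) : Set V :=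
  setNbhd G S ∪ S

/-!
If some maximum weight independent set `T` missed `y`, the neighbours of `x` in `T` would be
vertices of `S ∩ N(x)` together with an independent subset of `(N(x) \ {y}) \ N[S]`, of total
weight at most `ω(x)`. Swapping them for `x` gives another maximum weight independent set, which
misses the neighbours of `x` in `S`, contradicting that `S` lies in every such set.
-/

namespace IsIndepSet

variable {V : Type*} {G : SimpleGraph V}

lemma mono {B T : Finset V} (hT : IsIndepSet G T) (hBT : B ⊆ T) : IsIndepSet G B :=
  fun a ha b hb => hT a (hBT ha) b (hBT hb)

lemma insert_filter_not_adj {T : Finset V} (hT : IsIndepSet G T) (x : V) :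
    IsIndepSet G (insert x (T.filter (¬ G.Adj x ·))) := by
  intro a ha b hb hab
  simp only [Finset.mem_insert, Finset.mem_filter] at ha hb
  rcases ha with rfl | ⟨haT, hxa⟩ <;> rcases hb with rfl | ⟨hbT, hxb⟩
  · exact G.loopless.irrefl _ hab
  · exact hxb hab
  · exact hxa hab.symm
  · exact hT a haT b hbT hab

lemma notMem_closedSetNbhd {S T : Finset V} (hT : IsIndepSet G T) (hST : S ⊆ T) {v : V}
    (hvT : v ∈ T) (hvS : v ∉ S) : v ∉ closedSetNbhd G (↑S : Set V) := by
  rintro (⟨hv, -⟩ | hv)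
  · simp only [Set.mem_iUnion, SimpleGraph.mem_neighborSet, Finset.mem_coe] at hv
    obtain ⟨s, hsS, hsv⟩ := hv
    exact hT s (hST hsS) v hvT hsv
  · exact hvS hv

end IsIndepSet

section Weighted

variable {V : Type*} [Fintype V] {G : SimpleGraph V} (w : V → ℝ)

lemma sum_le_alphaOn {A : Set V} {B : Finset V} (hBA : ↑B ⊆ A) (hB : IsIndepSet G B) :
    ∑ v ∈ B, w v ≤ alphaOn G w A := by
  refine le_csSup ?_ ⟨B, hBA, hB, rfl⟩
  refine (Set.finite_range (fun T : Finset V => ∑ v ∈ T, w v)).bddAbove.mono ?_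
  rintro r ⟨T, -, -, rfl⟩
  exact ⟨T, rfl⟩

lemma IsMWIS.insert_filter_not_adj {T : Finset V} (hT : IsMWIS G w T) {x : V} (hxT : x ∉ T)
    (hx : ∑ v ∈ T.filter (G.Adj x ·), w v ≤ w x) :
    IsMWIS G w (insert x (T.filter (¬ G.Adj x ·))) := by
  have hind := hT.1.insert_filter_not_adj x
  have hxF : x ∉ T.filter (¬ G.Adj x ·) := fun h => hxT (Finset.mem_filter.mp h).1
  have hle : ∑ v ∈ T, w v ≤ ∑ v ∈ insert x (T.filter (¬ G.Adj x ·)), w v := by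
    rw [Finset.sum_insert hxF, ← Finset.sum_filter_add_sum_filter_not T (G.Adj x ·)]
    linarith
  refine ⟨hind, le_antisymm (sum_le_alphaOn w (Set.subset_univ _) hind) ?_⟩
  exact hT.2 ▸ hle

lemma sum_filter_adj_le_add_alphaOn {S T : Finset V} (hT : IsIndepSet G T) (hST : S ⊆ T)
    (x : V) {y : V} (hyT : y ∉ T) :
    ∑ v ∈ T.filter (G.Adj x ·), w v ≤ ∑ s ∈ S.filter (G.Adj x ·), w s +
      alphaOn G w ((G.neighborSet x \ {y}) \ closedSetNbhd G (↑S : Set V)) := by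
  have hin : (T.filter (G.Adj x ·)).filter (· ∈ S) = S.filter (G.Adj x ·) := by
    ext v
    simp only [Finset.mem_filter]
    exact ⟨fun ⟨⟨_, hxv⟩, hvS⟩ => ⟨hvS, hxv⟩, fun ⟨hvS, hxv⟩ => ⟨⟨hST hvS, hxv⟩, hvS⟩⟩
  have hout : ↑((T.filter (G.Adj x ·)).filter (· ∉ S)) ⊆
      (G.neighborSet x \ {y}) \ closedSetNbhd G (↑S : Set V) := by
    intro v hv
    simp only [Finset.coe_filter, Finset.mem_filter, Set.mem_ofPred_eq] at hv
    obtain ⟨⟨hvT, hxv⟩, hvS⟩ := hv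
    exact ⟨⟨hxv, fun hvy => hyT (hvy ▸ hvT)⟩, hT.notMem_closedSetNbhd hST hvT hvS⟩
  have hout_ind : IsIndepSet G ((T.filter (G.Adj x ·)).filter (· ∉ S)) :=
    hT.mono ((Finset.filter_subset _ _).trans (Finset.filter_subset _ _))
  rw [← Finset.sum_filter_add_sum_filter_not (T.filter (G.Adj x ·)) (· ∈ S), hin]
  exact add_le_add_right (sum_le_alphaOn w hout hout_ind) _

end Weighted

theorem stmt_15_general {V : Type*} [Fintype V] (G : SimpleGraph V) (w : V → ℝ)
    (S : Finset V)
    (hSall : ∀ T : Finset V, IsMWIS G w T → S ⊆ T)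
    (x : V) (hx : x ∈ setNbhd G (↑S : Set V))
    (y : V)
    (hwt : (∑ s ∈ S.filter (fun s => G.Adj x s), w s) +
        alphaOn G w ((G.neighborSet x \ {y}) \ closedSetNbhd G (↑S : Set V)) ≤ w x) :
    ∀ T : Finset V, IsMWIS G w T → y ∈ T := by
  intro T hT
  by_contra hyT
  obtain ⟨s, hsS, hsx⟩ : ∃ s ∈ S, G.Adj s x := by
    simpa only [Set.mem_iUnion, SimpleGraph.mem_neighborSet, Finset.mem_coe, exists_prop]
      using hx.1
  have hST := hSall T hT
  have hxT : x ∉ T := fun hxT => hT.1 s (hST hsS) x hxT hsx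
  have hswap := hT.insert_filter_not_adj w hxT
    ((sum_filter_adj_le_add_alphaOn w hT.1 hST x hyT).trans hwt)
  have hs := hSall _ hswap hsS
  simp only [Finset.mem_insert, Finset.mem_filter] at hs
  rcases hs with rfl | ⟨-, hxs⟩
  · exact G.loopless.irrefl s hsx
  · exact hxs hsx.symm

theorem stmt_15 {V : Type*} [Fintype V] (G : SimpleGraph V) (w : V → ℝ)
    (hw : ∀ x, 0 < w x) (S : Finset V) (hSind : IsIndepSet G S)
    (hSall : ∀ T : Finset V, IsMWIS G w T → S ⊆ T)
    (x : V) (hx : x ∈ setNbhd G (↑S : Set V))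
    (hchild : (∑ s ∈ S.filter (fun s => G.Adj x s), w s) ≤ w x)
    (y : V) (hyx : y ∈ G.neighborSet x) (hyS : y ∉ closedSetNbhd G (↑S : Set V))
    (hwt : (∑ s ∈ S.filter (fun s => G.Adj x s), w s) +
        alphaOn G w ((G.neighborSet x \ {y}) \ closedSetNbhd G (↑S : Set V)) ≤ w x) :
    ∀ T : Finset V, IsMWIS G w T → y ∈ T :=
  stmt_15_general G w S hSall x hx y hwt
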